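/- With C_x symmetric positive definite, a nonzero, and U as a matrix of orthonormal columns spanning a⊥, the vector b₄ᵀ = (aᵀ/|a|²) C_x⁻¹ - (aᵀ/|a|²) C_x⁻¹ U (Uᵀ C_x⁻¹ U)⁻¹ Uᵀ C_x⁻¹ satisfies b₄ᵀ U = 0 and b₄ᵀ (a/|a|²) = (aᵀ C_x a)⁻¹; consequently b₄ = (aᵀ C_x a)⁻¹ a. -/

import Mathlib

/-!
Write `M = Cx⁻¹` and `N = Uᵀ M U`, which is invertible because `M` is positive definite and `U` is
injective. Since `Uᵀ M U N⁻¹ Uᵀ M = Uᵀ M`, the vector `b₄` is killed by `Uᵀ`; and since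
`Cx b₄ = |a|⁻² (a - U N⁻¹ Uᵀ M a)` with `aᵀ U = 0`, we get `aᵀ Cx b₄ = 1`.
The columns of `U` together with `a` form a square matrix with orthogonal columns, so
`U Uᵀ + a aᵀ / |a|² = 1`; hence `b₄` is a multiple of `a`, and `aᵀ Cx b₄ = 1` fixes the multiple.
-/

open Matrix

namespace Matrix

variable {R m n : Type*} [Fintype m] [Fintype n]

theorem mul_sub_mul_inv_mul_eq_zero [CommRing R] [DecidableEq m] (V : Matrix m n R)
    (M : Matrix n n R) (U : Matrix n m R) (hN : IsUnit (V * M * U).det) :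
    V * (M - M * U * (V * M * U)⁻¹ * V * M) = 0 := by
  have hNN : V * M * U * (V * M * U)⁻¹ = 1 := mul_nonsing_inv _ hN
  rw [Matrix.mul_sub, sub_eq_zero]
  simp only [← Matrix.mul_assoc, hNN, Matrix.one_mul]

theorem dotProduct_mulVec_sub_mul_mulVec [CommRing R] [DecidableEq n] {C M : Matrix n n R}
    (hCM : C * M = 1) {U : Matrix n m R} {a : n → R} (hUa : Uᵀ *ᵥ a = 0) (B : Matrix m n R) :
    a ⬝ᵥ C *ᵥ ((M - M * U * B) *ᵥ a) = a ⬝ᵥ a := by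
  rw [mulVec_mulVec, Matrix.mul_sub, ← Matrix.mul_assoc, ← Matrix.mul_assoc, hCM,
    Matrix.one_mul, sub_mulVec, one_mulVec, dotProduct_sub, ← mulVec_mulVec, dotProduct_mulVec,
    ← mulVec_transpose, hUa, zero_dotProduct, sub_zero]

theorem PosDef.transpose_mul_mul_of_transpose_mul_self_eq_one [DecidableEq m] {M : Matrix n n ℝ}
    (hM : M.PosDef) {U : Matrix n m ℝ} (hUU : Uᵀ * U = 1) : (Uᵀ * M * U).PosDef := by
  have hU : Function.Injective U.mulVec := Function.LeftInverse.injective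
    (g := (Uᵀ *ᵥ ·)) fun x => by dsimp only; rw [mulVec_mulVec, hUU, one_mulVec]
  simpa only [conjTranspose_eq_transpose_of_trivial] using hM.conjTranspose_mul_mul_same hU

section Field

variable [Field R] [DecidableEq m] [DecidableEq n]

theorem mul_transpose_add_inv_smul_vecMulVec_eq_one (hcard : Fintype.card n = Fintype.card m + 1)
    {U : Matrix n m R} {a : n → R} (hUU : Uᵀ * U = 1) (hUa : Uᵀ *ᵥ a = 0) (ha : a ⬝ᵥ a ≠ 0) :
    U * Uᵀ + (a ⬝ᵥ a)⁻¹ • vecMulVec a a = 1 := by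
  have e : n ≃ m ⊕ Unit := Fintype.equivOfCardEq (by simpa using hcard)
  have hcomm : fromRows Uᵀ ((a ⬝ᵥ a)⁻¹ • replicateRow Unit a) * fromCols U (replicateCol Unit a)
      = 1 := by
    rw [fromRows_mul_fromCols, hUU, ← replicateCol_mulVec, hUa, Matrix.smul_mul,
      ← replicateRow_vecMul, ← mulVec_transpose, hUa, Matrix.smul_mul,
      replicateRow_mul_replicateCol]
    convert fromBlocks_one using 2
    · ext; simp
    · ext; simp
    · ext; simp [ha]
  -- `[U a]` is square, so its left inverse is also a right inverse.
  rw [← (fromCols_mul_fromRows_eq_one_comm e _ _ _ _).mpr hcomm, fromCols_mul_fromRows,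
    Matrix.mul_smul, vecMulVec_eq Unit]

theorem eq_div_smul_of_transpose_mulVec_eq_zero (hcard : Fintype.card n = Fintype.card m + 1)
    {U : Matrix n m R} {a : n → R} (hUU : Uᵀ * U = 1) (hUa : Uᵀ *ᵥ a = 0) (ha : a ⬝ᵥ a ≠ 0)
    {v : n → R} (hv : Uᵀ *ᵥ v = 0) :
    v = ((a ⬝ᵥ v) / (a ⬝ᵥ a)) • a := by
  calc v = (U * Uᵀ + (a ⬝ᵥ a)⁻¹ • vecMulVec a a) *ᵥ v := by
        rw [mul_transpose_add_inv_smul_vecMulVec_eq_one hcard hUU hUa ha, one_mulVec]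
    _ = ((a ⬝ᵥ v) / (a ⬝ᵥ a)) • a := by
        rw [add_mulVec, ← mulVec_mulVec, hv, mulVec_zero, zero_add, smul_mulVec,
          vecMulVec_mulVec, op_smul_eq_smul, smul_smul, div_eq_inv_mul]

theorem eq_inv_smul_of_transpose_mulVec_eq_zero (hcard : Fintype.card n = Fintype.card m + 1)
    {U : Matrix n m R} {a : n → R} (hUU : Uᵀ * U = 1) (hUa : Uᵀ *ᵥ a = 0) (ha : a ⬝ᵥ a ≠ 0)
    {C : Matrix n n R} {v : n → R}
    (hv : Uᵀ *ᵥ v = 0) (haCv : a ⬝ᵥ C *ᵥ v = 1) : v = (a ⬝ᵥ C *ᵥ a)⁻¹ • a := by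
  have hva := eq_div_smul_of_transpose_mulVec_eq_zero hcard hUU hUa ha hv
  rw [hva, mulVec_smul, dotProduct_smul, smul_eq_mul] at haCv
  rw [hva, eq_inv_of_mul_eq_one_left haCv]

end Field

end Matrix

theorem b4_is_scaled_a_general {K : ℕ}
    (Cx : Matrix (Fin K) (Fin K) ℝ) (hCx : Cx.PosDef)
    (a : Fin K → ℝ) (ha : a ≠ 0)
    (U : Matrix (Fin K) (Fin (K-1)) ℝ)
    (hUU : Uᵀ * U = 1) (hUa : Uᵀ.mulVec a = 0)
    (b₄ : Fin K → ℝ)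
    (hb₄ : b₄ = (a ⬝ᵥ a)⁻¹ •
      (Cx⁻¹.mulVec a - (Cx⁻¹ * U * (Uᵀ * Cx⁻¹ * U)⁻¹ * Uᵀ * Cx⁻¹).mulVec a)) :
    Uᵀ.mulVec b₄ = 0 ∧
    b₄ ⬝ᵥ ((a ⬝ᵥ a)⁻¹ • a) = (a ⬝ᵥ Cx.mulVec a)⁻¹ ∧
    b₄ = (a ⬝ᵥ Cx.mulVec a)⁻¹ • a := by
  have hs : a ⬝ᵥ a ≠ 0 := dotProduct_self_eq_zero.not.mpr ha
  have hcard : Fintype.card (Fin K) = Fintype.card (Fin (K - 1)) + 1 := by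
    have : K ≠ 0 := by rintro rfl; exact ha (Subsingleton.elim _ _)
    simp only [Fintype.card_fin]; omega
  have hN := (hCx.inv.transpose_mul_mul_of_transpose_mul_self_eq_one hUU).det_pos.ne'.isUnit
  have hUb : Uᵀ *ᵥ b₄ = 0 := by
    rw [hb₄, mulVec_smul, ← sub_mulVec, mulVec_mulVec, mul_sub_mul_inv_mul_eq_zero _ _ _ hN,
      zero_mulVec, smul_zero]
  have haCb : a ⬝ᵥ Cx *ᵥ b₄ = 1 := by
    have hassoc : Cx⁻¹ * U * (Uᵀ * Cx⁻¹ * U)⁻¹ * Uᵀ * Cx⁻¹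
        = Cx⁻¹ * U * ((Uᵀ * Cx⁻¹ * U)⁻¹ * Uᵀ * Cx⁻¹) := by simp only [Matrix.mul_assoc]
    rw [hb₄, mulVec_smul, dotProduct_smul, ← sub_mulVec, hassoc,
      dotProduct_mulVec_sub_mul_mulVec (mul_nonsing_inv _ hCx.det_pos.ne'.isUnit) hUa,
      smul_eq_mul, inv_mul_cancel₀ hs]
  have hb := eq_inv_smul_of_transpose_mulVec_eq_zero hcard hUU hUa hs hUb haCb
  refine ⟨hUb, ?_, hb⟩
  rw [hb, smul_dotProduct, dotProduct_smul, smul_eq_mul, smul_eq_mul, inv_mul_cancel₀ hs, mul_one]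

theorem b4_is_scaled_a {K : ℕ} (hK : 2 ≤ K)
    (Cx : Matrix (Fin K) (Fin K) ℝ) (hCx : Cx.PosDef)
    (a : Fin K → ℝ) (ha : a ≠ 0)
    (U : Matrix (Fin K) (Fin (K-1)) ℝ)
    (hUU : Uᵀ * U = 1) (hUa : Uᵀ.mulVec a = 0)
    (b₄ : Fin K → ℝ)
    (hb₄ : b₄ = (a ⬝ᵥ a)⁻¹ •
      (Cx⁻¹.mulVec a - (Cx⁻¹ * U * (Uᵀ * Cx⁻¹ * U)⁻¹ * Uᵀ * Cx⁻¹).mulVec a)) :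
    Uᵀ.mulVec b₄ = 0 ∧
    b₄ ⬝ᵥ ((a ⬝ᵥ a)⁻¹ • a) = (a ⬝ᵥ Cx.mulVec a)⁻¹ ∧
    b₄ = (a ⬝ᵥ Cx.mulVec a)⁻¹ • a :=
  b4_is_scaled_a_general Cx hCx a ha U hUU hUa b₄ hb₄
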